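/- arXiv:0901.1968 — 2 statements merged into one kernel-verified Lean document; each statement's English description precedes it below -/
import Mathlib

section
/- Let n ≥ 3 be an integer with 4 ∣ 3n, let s be a positive integer, and let A : {0,...,n} → ℝ satisfy A_i ≥ 0 for all i, A_0 = 1, ∑_i A_i = 2^s, A_1 = (1/2^s) ∑_i (3n - 4i) A_i, and A_2 = (1/2^s) ∑_i (1/2)((4i - 3n + 1)² - 3n - 1) A_i. Then 2^s ≥ 3n + 4. -/
/-!
Put `m = 3n/4 ∈ ℕ` and `h(x) = (4x - 3n)(4x - 3n - 4) = 16 (x - m)(x - m - 1)`, which is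
nonnegative at every integer. Expanding `h` in the two quadratic constraint polynomials and `1`,
the constraints give `∑ h(i) A_i = 2^s (3n + 6 A_1 + 2 A_2)`. Dropping all terms with `i > 2`
bounds this below by `h(0) + h(1) A_1 + h(2) A_2`, and since `4 ∣ n` forces `n ≥ 4`, the
coefficients of `A_1, A_2` on the right dominate those on the left unless `2^s ≥ 3n + 4`.
-/

open Finset

lemma Int.cast_mul_sub_one_nonneg (k : ℤ) : (0 : ℝ) ≤ k * (k - 1) := by
  rcases le_or_gt k 0 with hk | hk
  · have hkR : (k : ℝ) ≤ 0 := by exact_mod_cast hk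
    nlinarith
  · have hkR : (1 : ℝ) ≤ k := by exact_mod_cast hk
    nlinarith

lemma four_mul_sub_mul_sub_four_nonneg {n : ℕ} (hdvd : 4 ∣ 3 * n) (i : ℕ) :
    0 ≤ (4 * i - 3 * n : ℝ) * (4 * i - 3 * n - 4) := by
  obtain ⟨m, hm⟩ := hdvd
  have hmR : (3 * n : ℝ) = 4 * m := by exact_mod_cast hm
  have hk := Int.cast_mul_sub_one_nonneg ((i : ℤ) - m)
  push_cast at hk
  rw [hmR]
  nlinarith

lemma sum_four_mul_sub_mul_sub_four_mul_eq (t : Finset ℕ) (c : ℝ) (A : ℕ → ℝ) :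
    ∑ i ∈ t, (4 * i - c) * (4 * i - c - 4) * A i
      = 2 * ∑ i ∈ t, 1 / 2 * ((4 * i - c + 1) ^ 2 - c - 1) * A i
        + 6 * ∑ i ∈ t, (c - 4 * i) * A i + c * ∑ i ∈ t, A i := by
  simp only [mul_sum, ← sum_add_distrib]
  exact sum_congr rfl fun i _ ↦ by ring

lemma sum_range_three_le_sum_range {n : ℕ} (hn : 2 ≤ n) {f : ℕ → ℝ}
    (hf : ∀ i ≤ n, 0 ≤ f i) : f 0 + f 1 + f 2 ≤ ∑ i ∈ range (n + 1), f i := by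
  have hsub : range 3 ⊆ range (n + 1) := range_subset_range.2 (by omega)
  simpa [sum_range_succ] using
    sum_le_sum_of_subset_of_nonneg hsub fun i hi _ ↦ hf i (Nat.lt_succ_iff.1 (mem_range.1 hi))

lemma le_of_lp_bound {n N a₁ a₂ : ℝ} (hn : 4 ≤ n) (ha₁ : 0 ≤ a₁) (ha₂ : 0 ≤ a₂)
    (h : 3 * n * (3 * n + 4) + 3 * n * (3 * n - 4) * a₁ + (3 * n - 8) * (3 * n - 4) * a₂
      ≤ N * (3 * n + 6 * a₁ + 2 * a₂)) :
    3 * n + 4 ≤ N := by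
  by_contra! hlt
  have h₁ : (3 * n + 4) * 6 ≤ 3 * n * (3 * n - 4) := by nlinarith
  have h₂ : (3 * n + 4) * 2 ≤ (3 * n - 8) * (3 * n - 4) := by nlinarith
  nlinarith [mul_le_mul_of_nonneg_right h₁ ha₁, mul_le_mul_of_nonneg_right h₂ ha₂]

theorem lp_hamming_abstract_general (n : ℕ) (hn : 3 ≤ n) (hdvd : 4 ∣ 3 * n)
    (s : ℕ) (A : ℕ → ℝ)
    (hA0 : A 0 = 1)
    (hApos : ∀ i ≤ n, 0 ≤ A i)
    (hAsum : ∑ i ∈ Finset.range (n + 1), A i = 2 ^ s)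
    (hA1 : A 1 = (1 / 2 ^ s) * ∑ i ∈ Finset.range (n + 1), (3 * n - 4 * i : ℝ) * A i)
    (hA2 : A 2 = (1 / 2 ^ s) * ∑ i ∈ Finset.range (n + 1),
      (1 / 2) * ((4 * i - 3 * n + 1 : ℝ) ^ 2 - 3 * n - 1) * A i) :
    (2 : ℝ) ^ s ≥ 3 * n + 4 := by
  have hn4 : (4 : ℝ) ≤ n := by
    have h4n : 4 ∣ n := Nat.Coprime.dvd_of_dvd_mul_left (by norm_num) hdvd
    exact_mod_cast Nat.le_of_dvd (by omega) h4n
  have hsum : ∑ i ∈ range (n + 1), (4 * i - 3 * n : ℝ) * (4 * i - 3 * n - 4) * A i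
      = 2 ^ s * (3 * n + 6 * A 1 + 2 * A 2) := by
    rw [sum_four_mul_sub_mul_sub_four_mul_eq, hAsum, hA1, hA2]
    field_simp
    ring
  have hlow := sum_range_three_le_sum_range (by omega : 2 ≤ n) fun i hi ↦
    mul_nonneg (four_mul_sub_mul_sub_four_nonneg hdvd i) (hApos i hi)
  rw [hsum, hA0] at hlow
  refine le_of_lp_bound hn4 (hApos 1 (by omega)) (hApos 2 (by omega)) (le_of_eq_of_le ?_ hlow)
  push_cast
  ring

theorem lp_hamming_abstract (n : ℕ) (hn : 3 ≤ n) (hdvd : 4 ∣ 3 * n)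
    (s : ℕ) (hs : 1 ≤ s) (A : ℕ → ℝ)
    (hA0 : A 0 = 1)
    (hApos : ∀ i ≤ n, 0 ≤ A i)
    (hAsum : ∑ i ∈ Finset.range (n + 1), A i = 2 ^ s)
    (hA1 : A 1 = (1 / 2 ^ s) * ∑ i ∈ Finset.range (n + 1), (3 * n - 4 * i : ℝ) * A i)
    (hA2 : A 2 = (1 / 2 ^ s) * ∑ i ∈ Finset.range (n + 1),
      (1 / 2) * ((4 * i - 3 * n + 1 : ℝ) ^ 2 - 3 * n - 1) * A i) :
    (2 : ℝ) ^ s ≥ 3 * n + 4 :=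
  lp_hamming_abstract_general n hn hdvd s A hA0 hApos hAsum hA1 hA2
end

section
/- Let n = f_{m+2} - 1 with m ≥ 1, s a positive integer, and A : {0,...,n} → ℝ with A_i ≥ 0, A_0 = 1, ∑_i A_i = 2^s, satisfying the LP constraints A_1 = ⟨3n - 4x⟩, A_2 = (1/2)⟨(4x - 3n + 1)² - 3n - 1⟩, and ∑_{i even} A_i ≥ 2^{s-1}. Then 2^s > 3n + 4, i.e., s ≥ 2m + 5. -/
/-!
A single dual certificate for the linear program. With `x = 4i - 3n`, the weight
`2x² - 7x = 6n + 11 (3n - 4i) + 2 ((4i - 3n + 1)² - 3n - 1)` pairs with `A` to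
`2^s (6n + 11 A₁ + 4 A₂)` by the constraints. Since `3n = 4l` with `l` odd, the weight is
`4k(8k - 7)` for `k = i - l`: it vanishes at the odd point `l` and is at least `4` elsewhere,
so it dominates `4·[i even]`, and the even-weight constraint `∑_{i even} A_i ≥ 2^s / 2` saves
`2·2^s`. If `2^s ≤ 3n + 4`, the weight at `i = 1, 2` also dominates `11·2^s` and `4·2^s`, and
keeping only the term `i = 0` leaves `18n² + 21n - 4 ≤ (6n - 2) 2^s ≤ (6n - 2)(3n + 4)`,
which is false.
-/

def f (m : ℕ) : ℕ := (4 ^ m - 1) / 3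

theorem three_mul_f_add_one (m : ℕ) : 3 * f m + 1 = 4 ^ m := by
  have hdvd : 3 ∣ 4 ^ m - 1 := by simpa using Nat.sub_dvd_pow_sub_pow 4 1 m
  have hpos : 1 ≤ 4 ^ m := Nat.one_le_pow _ _ (by norm_num)
  rw [f, Nat.mul_div_cancel' hdvd]
  omega

theorem exists_odd_four_mul_eq_three_mul {n k : ℕ} (h : 3 * n + 4 = 4 ^ (k + 2)) :
    ∃ l, Odd l ∧ 4 * l = 3 * n := by
  have hpos : 1 ≤ 4 ^ (k + 1) := Nat.one_le_pow _ _ (by norm_num)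
  have heven : Even (4 ^ (k + 1)) := (even_two_mul 2).pow_of_ne_zero (by omega)
  refine ⟨4 ^ (k + 1) - 1, Nat.Even.sub_odd hpos heven odd_one, ?_⟩
  rw [pow_succ] at h
  omega

noncomputable def dualWeight (n i : ℕ) : ℝ :=
  2 * (4 * i - 3 * n : ℝ) ^ 2 - 7 * (4 * i - 3 * n)

theorem four_le_dualWeight {n l i : ℕ} (hl : 4 * l = 3 * n) (hi : i ≠ l) :
    4 ≤ dualWeight n i := by
  have hlR : (3 * n : ℝ) = 4 * l := by exact_mod_cast hl.symm
  rw [dualWeight, hlR]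
  rcases Nat.lt_or_gt_of_ne hi with h | h
  · have h' : (i : ℝ) + 1 ≤ l := by exact_mod_cast h
    nlinarith
  · have h' : (l : ℝ) + 1 ≤ i := by exact_mod_cast h
    nlinarith

theorem dualWeight_self {n l : ℕ} (hl : 4 * l = 3 * n) : dualWeight n l = 0 := by
  have hlR : (3 * n : ℝ) = 4 * l := by exact_mod_cast hl.symm
  rw [dualWeight, hlR]
  ring

theorem sum_dualWeight_mul {n : ℕ} {N : ℝ} {A : ℕ → ℝ}
    (hsum : ∑ i ∈ Finset.range (n + 1), A i = N)
    (h1 : ∑ i ∈ Finset.range (n + 1), (3 * n - 4 * i : ℝ) * A i = N * A 1)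
    (h2 : ∑ i ∈ Finset.range (n + 1), ((4 * i - 3 * n + 1 : ℝ) ^ 2 - 3 * n - 1) * A i
      = 2 * N * A 2) :
    ∑ i ∈ Finset.range (n + 1), dualWeight n i * A i = N * (6 * n + 11 * A 1 + 4 * A 2) := by
  have hw : ∀ i, dualWeight n i * A i = 6 * n * A i + 11 * ((3 * n - 4 * i : ℝ) * A i)
      + 2 * (((4 * i - 3 * n + 1 : ℝ) ^ 2 - 3 * n - 1) * A i) := fun i => by
    rw [dualWeight]; ring
  simp only [hw, Finset.sum_add_distrib, ← Finset.mul_sum, hsum, h1, h2]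
  ring

noncomputable def dualSlack (n : ℕ) (N : ℝ) (i : ℕ) : ℝ :=
  dualWeight n i - (if Even i then 4 else 0) - (if i = 1 then 11 * N else 0)
    - (if i = 2 then 4 * N else 0)

theorem dualSlack_nonneg {n l : ℕ} (hl : 4 * l = 3 * n) (hl_odd : Odd l) (hn : 5 ≤ n)
    {N : ℝ} (hN : N ≤ 3 * n + 4) (i : ℕ) : 0 ≤ dualSlack n N i := by
  have hnR : (5 : ℝ) ≤ n := by exact_mod_cast hn
  rcases (by omega : i = 1 ∨ i = 2 ∨ (i ≠ 1 ∧ i ≠ 2)) with rfl | rfl | ⟨h1, h2⟩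
  · norm_num [dualSlack, dualWeight]
    nlinarith
  · norm_num [dualSlack, dualWeight]
    nlinarith
  · simp only [dualSlack, h1, h2, if_false, sub_zero]
    by_cases hil : i = l
    · subst hil
      simp [dualWeight_self hl, Nat.not_even_iff_odd.mpr hl_odd]
    · have := four_le_dualWeight hl hil
      split_ifs <;> linarith

theorem sum_dualSlack_mul {n : ℕ} (hn : 2 ≤ n) {N : ℝ} {A : ℕ → ℝ}
    (hsum : ∑ i ∈ Finset.range (n + 1), A i = N)
    (h1 : ∑ i ∈ Finset.range (n + 1), (3 * n - 4 * i : ℝ) * A i = N * A 1)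
    (h2 : ∑ i ∈ Finset.range (n + 1), ((4 * i - 3 * n + 1 : ℝ) ^ 2 - 3 * n - 1) * A i
      = 2 * N * A 2) :
    ∑ i ∈ Finset.range (n + 1), dualSlack n N i * A i
      = 6 * n * N - 4 * ∑ i ∈ (Finset.range (n + 1)).filter Even, A i := by
  simp only [dualSlack, sub_mul, ite_mul, zero_mul, Finset.sum_sub_distrib,
    sum_dualWeight_mul hsum h1 h2, Finset.sum_ite_eq', Finset.mem_range, Finset.sum_filter]
  rw [if_pos (by omega), if_pos (by omega), Finset.mul_sum]
  simp only [mul_ite, mul_zero]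
  ring

theorem three_mul_add_four_lt_of_lp_constraints {n l : ℕ} (hl : 4 * l = 3 * n) (hl_odd : Odd l)
    (hn : 5 ≤ n)
    {N : ℝ} {A : ℕ → ℝ} (hA0 : A 0 = 1) (hA : ∀ i ≤ n, 0 ≤ A i)
    (hsum : ∑ i ∈ Finset.range (n + 1), A i = N)
    (h1 : ∑ i ∈ Finset.range (n + 1), (3 * n - 4 * i : ℝ) * A i = N * A 1)
    (h2 : ∑ i ∈ Finset.range (n + 1), ((4 * i - 3 * n + 1 : ℝ) ^ 2 - 3 * n - 1) * A i
      = 2 * N * A 2)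
    (heven : N ≤ 2 * ∑ i ∈ (Finset.range (n + 1)).filter Even, A i) :
    3 * n + 4 < N := by
  by_contra! hN
  have hterm_nonneg : ∀ i ∈ Finset.range (n + 1), 0 ≤ dualSlack n N i * A i := fun i hi =>
    mul_nonneg (dualSlack_nonneg hl hl_odd hn hN i) (hA i (Finset.mem_range_succ_iff.mp hi))
  have hsingle : dualSlack n N 0 * A 0
      ≤ 6 * n * N - 4 * ∑ i ∈ (Finset.range (n + 1)).filter Even, A i := by
    rw [← sum_dualSlack_mul (by omega) hsum h1 h2]
    exact Finset.single_le_sum hterm_nonneg (by simp)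
  simp only [dualSlack, dualWeight, hA0] at hsingle
  norm_num at hsingle
  have hnR : (5 : ℝ) ≤ n := by exact_mod_cast hn
  linarith [mul_le_mul_of_nonneg_left hN (by linarith : (0 : ℝ) ≤ 6 * n - 2)]

theorem lp_bound_fm2_sub_one_general (m : ℕ) (hm : 1 ≤ m) (n : ℕ)
    (hn : n = f (m + 2) - 1)
    (s : ℕ) (A : ℕ → ℝ)
    (hA0 : A 0 = 1)
    (hApos : ∀ i ≤ n, 0 ≤ A i)
    (hAsum : ∑ i ∈ Finset.range (n + 1), A i = 2 ^ s)
    (hA1 : A 1 = (1 / 2 ^ s) * ∑ i ∈ Finset.range (n + 1), (3 * n - 4 * i : ℝ) * A i)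
    (hA2 : A 2 = (1 / 2 ^ s) * ∑ i ∈ Finset.range (n + 1),
      (1 / 2) * ((4 * i - 3 * n + 1 : ℝ) ^ 2 - 3 * n - 1) * A i)
    (hEven : ∑ i ∈ (Finset.range (n + 1)).filter (fun i => Even i), A i
      ≥ 2 ^ (s - 1)) :
    (2 : ℝ) ^ s > 3 * n + 4 ∧ 2 * m + 5 ≤ s := by
  have hbig : 4 ^ 3 ≤ 4 ^ (m + 2) := Nat.pow_le_pow_right (by norm_num) (by omega)
  have hpow : 3 * n + 4 = 4 ^ (m + 2) := by
    have := three_mul_f_add_one (m + 2)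
    omega
  obtain ⟨l, hl_odd, hl⟩ := exists_odd_four_mul_eq_three_mul hpow
  have h1 : ∑ i ∈ Finset.range (n + 1), (3 * n - 4 * i : ℝ) * A i = 2 ^ s * A 1 := by
    rw [hA1]; field_simp
  have h2 : ∑ i ∈ Finset.range (n + 1), ((4 * i - 3 * n + 1 : ℝ) ^ 2 - 3 * n - 1) * A i
      = 2 * 2 ^ s * A 2 := by
    rw [hA2, Finset.mul_sum, Finset.mul_sum]; field_simp
  have heven : (2 : ℝ) ^ s ≤ 2 * ∑ i ∈ (Finset.range (n + 1)).filter Even, A i := by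
    refine le_trans ?_ (mul_le_mul_of_nonneg_left hEven zero_le_two)
    cases s <;> simp [pow_succ']
  have hlt :=
    three_mul_add_four_lt_of_lp_constraints hl hl_odd (by omega) hA0 hApos hAsum h1 h2 heven
  refine ⟨hlt, ?_⟩
  have h4 : ((4 ^ (m + 2) : ℕ) : ℝ) < 2 ^ s := by rw [← hpow]; exact_mod_cast hlt
  rw [Nat.cast_pow, Nat.cast_ofNat, show (4 : ℝ) = 2 ^ 2 by norm_num, ← pow_mul] at h4
  have := (pow_lt_pow_iff_right₀ one_lt_two).mp h4
  omega

theorem lp_bound_fm2_sub_one (m : ℕ) (hm : 1 ≤ m) (n : ℕ)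
    (hn : n = f (m + 2) - 1)
    (s : ℕ) (hs : 1 ≤ s) (A : ℕ → ℝ)
    (hA0 : A 0 = 1)
    (hApos : ∀ i ≤ n, 0 ≤ A i)
    (hAsum : ∑ i ∈ Finset.range (n + 1), A i = 2 ^ s)
    (hA1 : A 1 = (1 / 2 ^ s) * ∑ i ∈ Finset.range (n + 1), (3 * n - 4 * i : ℝ) * A i)
    (hA2 : A 2 = (1 / 2 ^ s) * ∑ i ∈ Finset.range (n + 1),
      (1 / 2) * ((4 * i - 3 * n + 1 : ℝ) ^ 2 - 3 * n - 1) * A i)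
    (hEven : ∑ i ∈ (Finset.range (n + 1)).filter (fun i => Even i), A i
      ≥ 2 ^ (s - 1)) :
    (2 : ℝ) ^ s > 3 * n + 4 ∧ 2 * m + 5 ≤ s :=
  lp_bound_fm2_sub_one_general m hm n hn s A hA0 hApos hAsum hA1 hA2 hEven
end
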